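/- The agreement function of the t-resilient adversary: let Π be a finite set of n processes and let 0 ≤ t ≤ n−1. For the adversary A_t = {S ⊆ Π : |S| ≥ n−t}, one has setcon(A_t|_P) = max(0, |P| − n + t + 1) for every P ⊆ Π. -/

import Mathlib

variable {α : Type*} [DecidableEq α]

/-- The restriction `A|_P` of an adversary `A` to a set of processes `P`:
the live sets of `A` that are contained in `P`. -/
def restrict (A : Finset (Finset α)) (P : Finset α) : Finset (Finset α) :=
  A.filter fun S => S ⊆ P

/-- The set consensus power `setcon A` of an adversary `A`:
`setcon ∅ = 0` and, for `A ≠ ∅`,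
`setcon A = 1 + max_{S ∈ A} min_{a ∈ S} setcon (A|_{S \ {a}})`. -/
def setcon (A : Finset (Finset α)) : ℕ :=
  if A = ∅ then 0
  else 1 + A.attach.sup fun S =>
    (S.1.attach.image fun a => setcon (restrict A (S.1.erase a.1))).min.untopD 0
termination_by A.card
decreasing_by
  apply Finset.card_lt_card
  rw [Finset.ssubset_def]
  refine ⟨Finset.filter_subset _ _, fun hsub => ?_⟩
  have hmem := hsub S.2
  rw [restrict, Finset.mem_filter] at hmem
  exact Finset.notMem_erase a.1 S.1 (hmem.2 a.2)

/-- The restriction `A|_{P,Q}`: live sets of `A` contained in `P` that intersect `Q`. -/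
def restrictTo (A : Finset (Finset α)) (P Q : Finset α) : Finset (Finset α) :=
  (restrict A P).filter fun S => (S ∩ Q).Nonempty

/-- An adversary is fair if for all `P` and all `Q ⊆ P`,
`setcon (A|_{P,Q}) = min |Q| (setcon (A|_P))`. -/
def Fair (A : Finset (Finset α)) : Prop :=
  ∀ P Q : Finset α, Q ⊆ P →
    setcon (restrictTo A P Q) = min Q.card (setcon (restrict A P))

/-- `csize A`: the minimal cardinality of a hitting set of `A`, i.e. of a set
intersecting every live set of `A`. -/
noncomputable def csize (A : Finset (Finset α)) : ℕ :=
  sInf {k | ∃ H : Finset α, H.card = k ∧ ∀ S ∈ A, (H ∩ S).Nonempty}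

/-!
For the threshold adversary `A = {S : m ≤ |S|}` one shows `setcon (A|_P) = |P| + 1 - m` by
strong induction on `P`. For a live set `S ⊆ P` and `a ∈ S`, the restriction `A|_{S ∖ {a}}` is
again a threshold adversary, on a smaller set, so every choice of `a` gives the same value
`|S| - m`; the maximum over live sets is then attained by the largest one, `P` itself.
-/
open Finset hiding restrict

lemma mem_restrict {A : Finset (Finset α)} {P S : Finset α} :
    S ∈ restrict A P ↔ S ∈ A ∧ S ⊆ P := mem_filter

lemma restrict_restrict (A : Finset (Finset α)) {P Q : Finset α} (h : Q ⊆ P) :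
    restrict (restrict A P) Q = restrict A Q := by
  ext S
  simp only [mem_restrict]
  exact ⟨fun hS => ⟨hS.1.1, hS.2⟩, fun hS => ⟨⟨hS.1, hS.2.trans h⟩, hS.2⟩⟩

lemma setcon_empty : setcon (∅ : Finset (Finset α)) = 0 := by
  rw [setcon, if_pos rfl]

lemma setcon_of_ne_empty {A : Finset (Finset α)} (hA : A ≠ ∅) :
    setcon A = 1 + A.sup fun S =>
      (S.image fun a => setcon (restrict A (S.erase a))).min.untopD 0 := by
  rw [setcon, if_neg hA, ← sup_attach A]
  congr 2
  funext S
  congr 2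
  ext
  simp

lemma untopD_min_image_of_forall_eq {β : Type*} {s : Finset β} {f : β → ℕ} {c : ℕ}
    (hf : ∀ x ∈ s, f x = c) (hc : s = ∅ → c = 0) : (s.image f).min.untopD 0 = c := by
  rcases s.eq_empty_or_nonempty with rfl | hs
  · simp [hc rfl]
  · rw [image_congr hf, image_const hs, min_singleton]
    rfl

theorem setcon_restrict_filter_card_le [Fintype α] (m : ℕ) (P : Finset α) :
    setcon (restrict (univ.filter fun S : Finset α => m ≤ S.card) P) = P.card + 1 - m := by
  set A := univ.filter fun S : Finset α => m ≤ S.card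
  have mem_A {S : Finset α} : S ∈ A ↔ m ≤ S.card := by simp [A]
  induction P using Finset.strongInduction with
  | H P ih =>
  rcases lt_or_ge P.card m with hP | hP
  · have hempty : restrict A P = ∅ := eq_empty_of_forall_notMem fun S hS => by
      rw [mem_restrict, mem_A] at hS
      have := card_le_card hS.2
      omega
    rw [hempty, setcon_empty]
    omega
  have hPmem : P ∈ restrict A P := mem_restrict.2 ⟨mem_A.2 hP, subset_rfl⟩
  have hinner : ∀ S ∈ restrict A P,
      (S.image fun a => setcon (restrict (restrict A P) (S.erase a))).min.untopD 0
        = S.card - m := by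
    intro S hS
    have hSP := (mem_restrict.1 hS).2
    refine untopD_min_image_of_forall_eq (fun a ha => ?_) (by rintro rfl; simp)
    have herase : S.erase a ⊂ P := (erase_ssubset ha).trans_le hSP
    rw [restrict_restrict A herase.subset, ih _ herase, card_erase_of_mem ha]
    have := card_pos.2 ⟨a, ha⟩
    omega
  have hsup : (restrict A P).sup (fun S => S.card - m) = P.card - m :=
    le_antisymm (Finset.sup_le fun S hS => by have := card_le_card (mem_restrict.1 hS).2; omega)
      (Finset.le_sup (f := fun S => S.card - m) hPmem)
  rw [setcon_of_ne_empty (ne_empty_of_mem hPmem), sup_congr rfl hinner, hsup]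
  omega

/-- the agreement function of the `t`-resilient adversary
(all subsets of size ≥ `n - t`, with `0 ≤ t ≤ n - 1`) is
`P ↦ max 0 (|P| - n + t + 1)`, expressed with truncated subtraction. -/
theorem setcon_tResilient [Fintype α] (t : ℕ) (ht : t < Fintype.card α) (P : Finset α) :
    setcon (restrict
        (Finset.univ.filter fun S : Finset α => Fintype.card α - t ≤ S.card) P) =
      P.card + t + 1 - Fintype.card α := by
  rw [setcon_restrict_filter_card_le]
  omega
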